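/- For odd n = 2k+1 with n ≥ 5, the schedule generated by the circle design has games-played difference index exactly 2. -/

import Mathlib

/-- `f` lists the games of a single round-robin tournament on `n` teams:
positions `0, ..., N-1` are in bijection with the unordered pairs of distinct teams. -/
def isSchedule (n N : ℕ) (f : ℕ → Sym2 (Fin n)) : Prop :=
  (∀ i, i < N → ¬ (f i).IsDiag) ∧
  ∀ p : Sym2 (Fin n), ¬ p.IsDiag → ∃! i, i < N ∧ f i = p

/-- The schedule has guaranteed rest time at least `b`: any two games involving a
common team `t` are separated by at least `b` games not involving `t`. -/
def hasRest (n N : ℕ) (f : ℕ → Sym2 (Fin n)) (b : ℕ) : Prop :=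
  ∀ t : Fin n, ∀ i j, i < j → j < N → t ∈ f i → t ∈ f j →
    b ≤ ((Finset.Ioo i j).filter (fun l => t ∉ f l)).card

/-- Number of games played by team `t` in the first `m` games. -/
def played (n : ℕ) (f : ℕ → Sym2 (Fin n)) (t : Fin n) (m : ℕ) : ℕ :=
  ((Finset.range m).filter (fun i => t ∈ f i)).card

/-- The games-played difference index is at most `p`. -/
def gpLe (n N : ℕ) (f : ℕ → Sym2 (Fin n)) (p : ℕ) : Prop :=
  ∀ m, m ≤ N → ∀ t1 t2 : Fin n, played n f t1 m ≤ played n f t2 m + p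

/-- The rest of team `t` going into the game at position `i`: the number of games since
`t`'s previous game, where all teams play an imaginary game one slot before game `0`. -/
def rest (n : ℕ) (f : ℕ → Sym2 (Fin n)) (t : Fin n) (i : ℕ) : ℕ :=
  ((Finset.range i).filter (fun j => ∀ l, j ≤ l → l < i → t ∉ f l)).card

/-- The rest difference index is at most `d`. -/
def rdLe (n N : ℕ) (f : ℕ → Sym2 (Fin n)) (d : ℕ) : Prop :=
  ∀ i, i < N → ∀ t1 t2 : Fin n, t1 ∈ f i → t2 ∈ f i →
    rest n f t1 i ≤ rest n f t2 i + d

/-- Circle design for odd `n = 2k+1` teams `0, ..., 2k` (team `t` is team `t+1` of the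
paper): a dummy team is fixed at the top-left; the `2k+1` real teams occupy cyclic
positions `0, ..., 2k` (top-row columns `1..k` left to right, then bottom-row columns
`k` down to `0`), each rotating one step per round; the team at cyclic position `2k`
(below the dummy) sits out the round. -/
def circleTeamO (k : ℕ) (r c : ℕ) : Fin (2*k+1) :=
  ⟨(c + (2*k+1) - r % (2*k+1)) % (2*k+1), Nat.mod_lt _ (by omega)⟩

/-- The `i`-th game (0-indexed) of the asynchronous circle-design schedule for `2k+1`
teams: round `i / k`, column `i % k + 1`, columns read left to right. -/
def circleGameO (k : ℕ) (i : ℕ) : Sym2 (Fin (2*k+1)) :=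
  s(circleTeamO k (i / k) (i % k), circleTeamO k (i / k) (2*k - 1 - i % k))

/-! In round `r` team `t` stands at cyclic position `p = (t + r) mod (2k+1)`; for `p < 2k` it
plays exactly one game of the round, in column `min p (2k-1-p)`, and for `p = 2k` it sits out.
So during the first `R ≤ 2k+1` complete rounds every team plays once per round except in the
at most one round it sits out, and after `m` games every team has played between `m / k - 1`
and `m / k + 1` games. The bound is attained after `2k+1` games: team `2k` sat out round `0` and
has one game, while team `2k-3` played in rounds `0` and `1` and opens round `2`. -/

def circlePos (k : ℕ) (t : Fin (2*k+1)) (r : ℕ) : ℕ := (t.val + r) % (2*k+1)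

open Fin.NatCast in
lemma circleTeamO_eq_iff {k r c : ℕ} (hc : c < 2*k+1) (t : Fin (2*k+1)) :
    circleTeamO k r c = t ↔ circlePos k t r = c := by
  have hsub : circleTeamO k r c = (c : Fin (2*k+1)) - r := by
    ext
    simp only [circleTeamO, Fin.sub_def, Fin.val_natCast, Nat.mod_eq_of_lt hc]
    congr 1
    have := Nat.mod_lt r (show 0 < 2*k+1 by omega)
    omega
  rw [hsub, eq_comm, eq_sub_iff_add_eq, Fin.ext_iff, Fin.val_add, Fin.val_natCast,
    Fin.val_natCast, Nat.add_mod_mod, Nat.mod_eq_of_lt hc]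
  rfl

lemma mem_circleGameO_mul_add_iff {k r c : ℕ} (hc : c < k) (t : Fin (2*k+1)) :
    t ∈ circleGameO k (k*r + c) ↔ circlePos k t r = c ∨ circlePos k t r = 2*k-1-c := by
  have hdiv : (k*r + c) / k = r := by
    rw [Nat.mul_add_div (by omega), Nat.div_eq_of_lt hc, add_zero]
  have hmod : (k*r + c) % k = c := by rw [Nat.mul_add_mod, Nat.mod_eq_of_lt hc]
  rw [circleGameO, hdiv, hmod, Sym2.mem_iff, eq_comm, eq_comm (a := t),
    circleTeamO_eq_iff (by omega), circleTeamO_eq_iff (by omega)]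

lemma mem_circleGameO_iff {k : ℕ} (hk : 0 < k) (t : Fin (2*k+1)) (i : ℕ) :
    t ∈ circleGameO k i ↔
      circlePos k t (i / k) = i % k ∨ circlePos k t (i / k) = 2*k-1 - i % k := by
  conv_lhs => rw [← Nat.div_add_mod i k]
  exact mem_circleGameO_mul_add_iff (Nat.mod_lt i hk) t

lemma circlePos_lt (k : ℕ) (t : Fin (2*k+1)) (r : ℕ) : circlePos k t r < 2*k+1 :=
  Nat.mod_lt _ (by omega)

lemma circlePos_inj {k r r' : ℕ} (t : Fin (2*k+1)) (hr : r < 2*k+1) (hr' : r' < 2*k+1)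
    (h : circlePos k t r = circlePos k t r') : r = r' := by
  have : r ≡ r' [MOD 2*k+1] := Nat.ModEq.add_left_cancel' t.val h
  rwa [Nat.ModEq, Nat.mod_eq_of_lt hr, Nat.mod_eq_of_lt hr'] at this

lemma played_succ {n : ℕ} (f : ℕ → Sym2 (Fin n)) (t : Fin n) (m : ℕ) :
    played n f t (m+1) = played n f t m + if t ∈ f m then 1 else 0 := by
  simp only [played, Finset.range_add_one, Finset.filter_insert]
  split_ifs
  · rw [Finset.card_insert_of_notMem (by simp)]
  · rfl

lemma played_mono {n : ℕ} (f : ℕ → Sym2 (Fin n)) (t : Fin n) : Monotone (played n f t) :=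
  fun _ _ h => Finset.card_le_card (Finset.filter_subset_filter _ (Finset.range_mono h))

lemma played_circleGameO_mul {k : ℕ} (hk : 0 < k) (t : Fin (2*k+1)) (R : ℕ) :
    played (2*k+1) (circleGameO k) t (k*R) =
      ((Finset.range R).filter fun r => circlePos k t r ≠ 2*k).card := by
  have hpos := circlePos_lt k t
  apply Finset.card_nbij' (· / k)
    (fun r => k*r + min (circlePos k t r) (2*k-1 - circlePos k t r))
  · intro i hi
    simp only [Finset.mem_coe, Finset.mem_filter, Finset.mem_range,
      mem_circleGameO_iff hk] at hi ⊢
    have := Nat.mod_lt i hk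
    exact ⟨Nat.div_lt_of_lt_mul hi.1, by omega⟩
  · intro r hr
    simp only [Finset.mem_coe, Finset.mem_filter, Finset.mem_range] at hr ⊢
    have hc : min (circlePos k t r) (2*k-1 - circlePos k t r) < k := by
      have := hpos r; omega
    refine ⟨?_, (mem_circleGameO_mul_add_iff hc t).2 (by have := hpos r; omega)⟩
    calc _ < k*(r+1) := by rw [mul_add_one]; omega
      _ ≤ k*R := Nat.mul_le_mul_left k hr.1
  · intro i hi
    simp only [Finset.mem_coe, Finset.mem_filter, Finset.mem_range,
      mem_circleGameO_iff hk] at hi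
    have := Nat.mod_lt i hk
    have : min (circlePos k t (i / k)) (2*k-1 - circlePos k t (i / k)) = i % k := by omega
    simp only [this, Nat.div_add_mod]
  · intro r hr
    simp only [Finset.mem_coe, Finset.mem_filter, Finset.mem_range] at hr
    have := hpos r
    dsimp only
    rw [Nat.mul_add_div hk, Nat.div_eq_of_lt (by omega), add_zero]

lemma card_circlePos_eq_le_one {k R : ℕ} (hR : R ≤ 2*k+1) (t : Fin (2*k+1)) :
    ((Finset.range R).filter fun r => circlePos k t r = 2*k).card ≤ 1 := by
  refine Finset.card_le_one.2 fun r hr r' hr' => ?_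
  simp only [Finset.mem_filter, Finset.mem_range] at hr hr'
  exact circlePos_inj t (by omega) (by omega) (hr.2.trans hr'.2.symm)

lemma played_circleGameO_le {k : ℕ} (hk : 0 < k) (t : Fin (2*k+1)) (m : ℕ) :
    played (2*k+1) (circleGameO k) t m ≤ m / k + 1 :=
  calc played (2*k+1) (circleGameO k) t m
      ≤ played (2*k+1) (circleGameO k) t (k * (m / k + 1)) :=
        played_mono _ t (Nat.lt_mul_div_succ m hk).le
    _ ≤ m / k + 1 := by
        rw [played_circleGameO_mul hk]
        exact (Finset.card_filter_le _ _).trans (Finset.card_range _).le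

lemma div_le_played_circleGameO_add_one {k m : ℕ} (hk : 0 < k) (hm : m ≤ k*(2*k+1))
    (t : Fin (2*k+1)) : m / k ≤ played (2*k+1) (circleGameO k) t m + 1 := by
  have hR : m / k ≤ 2*k+1 := Nat.div_le_of_le_mul hm
  have hsplit := Finset.card_filter_add_card_filter_not (s := Finset.range (m / k))
    fun r => circlePos k t r = 2*k
  rw [Finset.card_range] at hsplit
  have hround : played (2*k+1) (circleGameO k) t (k * (m / k)) ≤
      played (2*k+1) (circleGameO k) t m := played_mono _ t (Nat.mul_div_le m k)
  rw [played_circleGameO_mul hk] at hround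
  simp only [ne_eq] at hround
  have := card_circlePos_eq_le_one hR t
  omega

lemma circleGameO_gpLe_two {k N : ℕ} (hk : 0 < k) (hN : N ≤ k*(2*k+1)) :
    gpLe (2*k+1) N (circleGameO k) 2 := by
  intro m hm t₁ t₂
  have h₁ := played_circleGameO_le hk t₁ m
  have h₂ := div_le_played_circleGameO_add_one hk (hm.trans hN) t₂
  omega

lemma not_circleGameO_gpLe_one {k N : ℕ} (hk : 2 ≤ k) (hN : 2*k+1 ≤ N) :
    ¬ gpLe (2*k+1) N (circleGameO k) 1 := by
  have hplayed : ∀ t, played (2*k+1) (circleGameO k) t (k*2+1) =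
      (if circlePos k t 0 ≠ 2*k then 1 else 0) + (if circlePos k t 1 ≠ 2*k then 1 else 0) +
      if t ∈ circleGameO k (k*2+0) then 1 else 0 := fun t => by
    rw [played_succ, played_circleGameO_mul (by omega), Finset.card_filter,
      Finset.sum_range_succ, Finset.sum_range_one, add_zero]
  let a : Fin (2*k+1) := ⟨2*k-3, by omega⟩
  have ha : played (2*k+1) (circleGameO k) a (k*2+1) = 3 := by
    have hpos : ∀ r ≤ 2, circlePos k a r = 2*k-3 + r := fun r hr =>
      Nat.mod_eq_of_lt (show 2*k-3 + r < 2*k+1 by omega)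
    have hmem : a ∈ circleGameO k (k*2+0) :=
      (mem_circleGameO_mul_add_iff (by omega) a).2 (Or.inr (by rw [hpos 2 le_rfl]; omega))
    rw [hplayed, hpos 0 (by omega), hpos 1 (by omega), if_pos (by omega), if_pos (by omega),
      if_pos hmem]
  have hlast : played (2*k+1) (circleGameO k) (Fin.last (2*k)) (k*2+1) = 1 := by
    have h₀ : circlePos k (Fin.last (2*k)) 0 = 2*k := Nat.mod_eq_of_lt (by simp)
    have h₁ : circlePos k (Fin.last (2*k)) 1 = 0 := Nat.mod_self _
    have h₂ : circlePos k (Fin.last (2*k)) 2 = 1 := by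
      rw [circlePos, Fin.val_last, show 2*k+2 = 1 + (2*k+1) by ring, Nat.add_mod_right,
        Nat.mod_eq_of_lt (by omega)]
    have hmem : Fin.last (2*k) ∉ circleGameO k (k*2+0) := by
      rw [mem_circleGameO_mul_add_iff (by omega), h₂]; omega
    rw [hplayed, h₀, h₁, if_neg (by omega), if_pos (by omega), if_neg hmem]
  intro h
  have := h (k*2+1) (by omega) a (Fin.last (2*k))
  omega

/-- For odd `n = 2k+1 ≥ 5`, the circle-design schedule has games-played difference
index exactly `2`. -/
theorem stmt13 (k : ℕ) (hk : 2 ≤ k) :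
    gpLe (2*k+1) ((2*k+1)*(2*k)/2) (circleGameO k) 2 ∧
    ¬ gpLe (2*k+1) ((2*k+1)*(2*k)/2) (circleGameO k) 1 := by
  have hN : (2*k+1)*(2*k)/2 = k*(2*k+1) := by
    rw [mul_comm, mul_assoc, Nat.mul_div_cancel_left _ two_pos]
  rw [hN]
  exact ⟨circleGameO_gpLe_two (by omega) le_rfl,
    not_circleGameO_gpLe_one hk (Nat.le_mul_of_pos_left _ (by omega))⟩
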